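/- arXiv:math/0302159 — 2 statements merged into one kernel-verified Lean document; each statement's English description precedes it below -/
import Mathlib

section
/- Let (Ω, μ) be a measure space, N ≥ 1, 1 < p < ∞, p' = p/(p−1), and let a : Ω × ℝ^N → ℝ^N be a Carathéodory function satisfying the growth condition |a(x, ξ)| ≤ α(k(x) + |ξ|^{p−1}) with α ≥ 0, k ∈ L^{p'}(Ω, μ), k ≥ 0, and the strict monotonicity condition (a(x, ξ) − a(x, η)) · (ξ − η) > 0 for a.e. x ∈ Ω and all ξ ≠ η in ℝ^N. If F, G ∈ L^p(Ω, μ; ℝ^N) satisfy ∫_Ω (a(x, F(x)) − a(x, G(x))) · (F(x) − G(x)) dμ ≤ 0, then F = G μ-a.e. on Ω. -/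
/-!
The Nemytskii operator of a Carathéodory function with `(p - 1)`-growth maps `L^p` into
`L^{p'}`, so by Hölder the integrand `(a(x, F) - a(x, G)) · (F - G)` is integrable. By
monotonicity it is nonnegative, so a nonpositive integral forces it to vanish a.e., and strict
monotonicity then gives `F = G` a.e.
-/

open MeasureTheory TopologicalSpace

namespace MeasureTheory

variable {Ω E F : Type*} [MeasurableSpace Ω] {μ : Measure Ω}

theorem AEStronglyMeasurable.caratheodory_apply [TopologicalSpace E] [TopologicalSpace F]
    [PseudoMetrizableSpace F] [SecondCountableTopology F] [MeasurableSpace F] [BorelSpace F]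
    {a : Ω → E → F} (hmeas : ∀ ξ, Measurable fun x => a x ξ)
    (hcont : ∀ᵐ x ∂μ, Continuous (a x)) {f : Ω → E} (hf : AEStronglyMeasurable f μ) :
    AEStronglyMeasurable (fun x => a x (f x)) μ := by
  obtain ⟨g, hg, hfg⟩ := hf
  -- `a(·, g)` is the a.e. limit of `a(·, gₙ)` for simple `gₙ → g`, and each `a(·, gₙ)` is measurable.
  have hmeas_approx : ∀ n, Measurable fun x => a x (hg.approx n x) := fun n =>
    (hg.approx n).measurable_bind (fun ξ x => a x ξ) hmeas
  have htendsto : ∀ᵐ x ∂μ,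
      Filter.Tendsto (fun n => a x (hg.approx n x)) Filter.atTop (nhds (a x (g x))) := by
    filter_upwards [hcont] with x hx
    exact (hx.tendsto _).comp (hg.tendsto_approx x)
  refine (aemeasurable_of_tendsto_metrizable_ae _ (fun n => (hmeas_approx n).aemeasurable)
    htendsto).aestronglyMeasurable.congr ?_
  filter_upwards [hfg] with x hx
  rw [hx]

variable [NormedAddCommGroup E]

theorem MemLp.norm_rpow_sub_one {p : ℝ} (hp : 1 < p) {f : Ω → E}
    (hf : MemLp f (ENNReal.ofReal p) μ) :
    MemLp (fun x => ‖f x‖ ^ (p - 1)) (ENNReal.ofReal (p / (p - 1))) μ := by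
  have hp₁ : 0 < p - 1 := sub_pos.mpr hp
  have := hf.norm_rpow_div (ENNReal.ofReal (p - 1))
  rwa [ENNReal.toReal_ofReal hp₁.le, ← ENNReal.ofReal_div_of_pos hp₁] at this

theorem MemLp.caratheodory_apply_of_growth [NormedAddCommGroup F] [SecondCountableTopology F]
    [MeasurableSpace F] [BorelSpace F] {p α : ℝ} (hp : 1 < p) {a : Ω → E → F}
    (hmeas : ∀ ξ, Measurable fun x => a x ξ) (hcont : ∀ᵐ x ∂μ, Continuous (a x))
    {k : Ω → ℝ} (hk : MemLp k (ENNReal.ofReal (p / (p - 1))) μ)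
    (hgrowth : ∀ᵐ x ∂μ, ∀ ξ, ‖a x ξ‖ ≤ α * (k x + ‖ξ‖ ^ (p - 1)))
    {f : Ω → E} (hf : MemLp f (ENNReal.ofReal p) μ) :
    MemLp (fun x => a x (f x)) (ENNReal.ofReal (p / (p - 1))) μ := by
  refine ((hk.add (hf.norm_rpow_sub_one hp)).const_mul α).of_le
    (hf.1.caratheodory_apply hmeas hcont) ?_
  filter_upwards [hgrowth] with x hx
  exact (hx (f x)).trans (le_abs_self _)

theorem MemLp.integrable_inner [InnerProductSpace ℝ E] {p q : ENNReal} [p.HolderConjugate q]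
    {u v : Ω → E} (hu : MemLp u p μ) (hv : MemLp v q μ) :
    Integrable (fun x => inner ℝ (u x) (v x)) μ := by
  refine memLp_one_iff_integrable.mp
    (hu.of_bilin (fun ξ η => inner ℝ ξ η) 1 hv (hu.1.inner hv.1) ?_)
  filter_upwards with x
  simpa using nnnorm_inner_le_nnnorm (𝕜 := ℝ) (u x) (v x)

end MeasureTheory

theorem ae_eq_of_integral_strict_monotone_nonpos_general
    {Ω : Type*} [MeasurableSpace Ω] (μ : Measure Ω)
    (N : ℕ) (p : ℝ) (hp : 1 < p)
    (a : Ω → EuclideanSpace ℝ (Fin N) → EuclideanSpace ℝ (Fin N))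
    (hmeas : ∀ ξ : EuclideanSpace ℝ (Fin N), Measurable fun x => a x ξ)
    (hcont : ∀ᵐ x ∂μ, Continuous (a x))
    (α : ℝ)
    (k : Ω → ℝ) (hk : MemLp k (ENNReal.ofReal (p / (p - 1))) μ)
    (hgrowth : ∀ᵐ x ∂μ, ∀ ξ : EuclideanSpace ℝ (Fin N),
      ‖a x ξ‖ ≤ α * (k x + ‖ξ‖ ^ (p - 1)))
    (hmono : ∀ᵐ x ∂μ, ∀ ξ η : EuclideanSpace ℝ (Fin N), ξ ≠ η →
      0 < (inner ℝ (a x ξ - a x η) (ξ - η) : ℝ))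
    (F G : Ω → EuclideanSpace ℝ (Fin N))
    (hF : MemLp F (ENNReal.ofReal p) μ) (hG : MemLp G (ENNReal.ofReal p) μ)
    (hint : (∫ x, (inner ℝ (a x (F x) - a x (G x)) (F x - G x) : ℝ) ∂μ) ≤ 0) :
    F =ᵐ[μ] G := by
  have : (ENNReal.ofReal (p / (p - 1))).HolderConjugate (ENNReal.ofReal p) :=
    (Real.HolderConjugate.conjExponent hp).symm.ennrealOfReal
  have hdiff : MemLp (fun x => a x (F x) - a x (G x)) (ENNReal.ofReal (p / (p - 1))) μ :=
    (MemLp.caratheodory_apply_of_growth hp hmeas hcont hk hgrowth hF).sub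
      (MemLp.caratheodory_apply_of_growth hp hmeas hcont hk hgrowth hG)
  have hintegrable := hdiff.integrable_inner (hF.sub hG)
  have hnonneg : ∀ᵐ x ∂μ, 0 ≤ (inner ℝ (a x (F x) - a x (G x)) (F x - G x) : ℝ) := by
    filter_upwards [hmono] with x hx
    by_cases h : F x = G x
    · simp [h]
    · exact (hx _ _ h).le
  have hzero := (integral_eq_zero_iff_of_nonneg_ae hnonneg hintegrable).mp
    (le_antisymm hint (integral_nonneg_of_ae hnonneg))
  filter_upwards [hmono, hzero] with x hx hx₀
  by_contra h
  exact (hx _ _ h).ne' hx₀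

/-- For a Carathéodory function `a` satisfying the growth condition and strict
monotonicity `(a(x, ξ) - a(x, η)) · (ξ - η) > 0` for `ξ ≠ η`, if `F, G ∈ L^p(Ω; ℝ^N)` and
`∫ (a(x, F(x)) - a(x, G(x))) · (F(x) - G(x)) dμ ≤ 0`, then `F = G` μ-a.e. -/
theorem ae_eq_of_integral_strict_monotone_nonpos
    {Ω : Type*} [MeasurableSpace Ω] (μ : Measure Ω)
    (N : ℕ) (hN : 1 ≤ N) (p : ℝ) (hp : 1 < p)
    (a : Ω → EuclideanSpace ℝ (Fin N) → EuclideanSpace ℝ (Fin N))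
    (hmeas : ∀ ξ : EuclideanSpace ℝ (Fin N), Measurable fun x => a x ξ)
    (hcont : ∀ᵐ x ∂μ, Continuous (a x))
    (α : ℝ) (hα : 0 ≤ α)
    (k : Ω → ℝ) (hk : MemLp k (ENNReal.ofReal (p / (p - 1))) μ) (hknn : ∀ x, 0 ≤ k x)
    (hgrowth : ∀ᵐ x ∂μ, ∀ ξ : EuclideanSpace ℝ (Fin N),
      ‖a x ξ‖ ≤ α * (k x + ‖ξ‖ ^ (p - 1)))
    (hmono : ∀ᵐ x ∂μ, ∀ ξ η : EuclideanSpace ℝ (Fin N), ξ ≠ η →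
      0 < (inner ℝ (a x ξ - a x η) (ξ - η) : ℝ))
    (F G : Ω → EuclideanSpace ℝ (Fin N))
    (hF : MemLp F (ENNReal.ofReal p) μ) (hG : MemLp G (ENNReal.ofReal p) μ)
    (hint : (∫ x, (inner ℝ (a x (F x) - a x (G x)) (F x - G x) : ℝ) ∂μ) ≤ 0) :
    F =ᵐ[μ] G :=
  ae_eq_of_integral_strict_monotone_nonpos_general μ N p hp a hmeas hcont α k hk hgrowth hmono F G
    hF hG hint
end

section
/- Let b : ℝ^N → ℝ^N be continuous and strictly monotone, i.e. (b(ξ) − b(η)) · (ξ − η) > 0 for all ξ ≠ η in ℝ^N. Let (ξ_n) be a bounded sequence in ℝ^N and ξ ∈ ℝ^N such that (b(ξ_n) − b(ξ)) · (ξ_n − ξ) → 0 as n → ∞. Then ξ_n → ξ. -/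
/-!
The sequence stays in a compact ball, so it suffices that every cluster point `η` equals `ξ₀`.
By continuity the pairing `(b η - b ξ₀) · (η - ξ₀)` is a limit of the vanishing pairings, hence
`0`, and strict monotonicity forces `η = ξ₀`.
-/

open Filter Topology

theorem IsCompact.tendsto_nhds_of_tendsto_comp {X Y ι : Type*} [TopologicalSpace X]
    [TopologicalSpace Y] [T2Space Y] {K : Set X} (hK : IsCompact K) {g : X → Y}
    (hg : Continuous g) {x₀ : X} {y : Y} (hfiber : ∀ x ∈ K, g x = y → x = x₀) {l : Filter ι}
    {u : ι → X} (hu : ∀ᶠ i in l, u i ∈ K) (h : Tendsto (g ∘ u) l (𝓝 y)) :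
    Tendsto u l (𝓝 x₀) := by
  refine hK.tendsto_nhds_of_unique_mapClusterPt hu fun x hxK hx => hfiber x hxK ?_
  have hgx : MapClusterPt (g x) l (g ∘ u) := hx.continuousAt_comp hg.continuousAt
  exact eq_of_nhds_neBot (hgx.clusterPt.mono h)

theorem eq_of_inner_sub_eq_zero_of_strictMono {E : Type*} [NormedAddCommGroup E]
    [InnerProductSpace ℝ E] {b : E → E}
    (hmono : ∀ ξ η : E, ξ ≠ η → 0 < (inner ℝ (b ξ - b η) (ξ - η) : ℝ)) {ξ η : E}
    (h : (inner ℝ (b ξ - b η) (ξ - η) : ℝ) = 0) : ξ = η := by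
  by_contra hne
  exact (hmono ξ η hne).ne' h

/-- If `b : ℝ^N → ℝ^N` is continuous and strictly monotone, `(ξ_n)` is a bounded sequence
and `(b(ξ_n) - b(ξ)) · (ξ_n - ξ) → 0`, then `ξ_n → ξ`. -/
theorem tendsto_of_strict_monotone_pairing
    (N : ℕ) (b : EuclideanSpace ℝ (Fin N) → EuclideanSpace ℝ (Fin N))
    (hb : Continuous b)
    (hmono : ∀ ξ η : EuclideanSpace ℝ (Fin N), ξ ≠ η →
      0 < (inner ℝ (b ξ - b η) (ξ - η) : ℝ))
    (ξ : ℕ → EuclideanSpace ℝ (Fin N)) (C : ℝ) (hbound : ∀ n, ‖ξ n‖ ≤ C)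
    (ξ₀ : EuclideanSpace ℝ (Fin N))
    (hconv : Tendsto (fun n => (inner ℝ (b (ξ n) - b ξ₀) (ξ n - ξ₀) : ℝ)) atTop (nhds 0)) :
    Tendsto ξ atTop (nhds ξ₀) := by
  have hpairing : Continuous fun x => (inner ℝ (b x - b ξ₀) (x - ξ₀) : ℝ) :=
    (hb.sub continuous_const).inner (continuous_id.sub continuous_const)
  have hball : ∀ᶠ n in atTop, ξ n ∈ Metric.closedBall 0 C :=
    Eventually.of_forall fun n => mem_closedBall_zero_iff.mpr (hbound n)
  exact (isCompact_closedBall 0 C).tendsto_nhds_of_tendsto_comp hpairing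
    (fun x _ => eq_of_inner_sub_eq_zero_of_strictMono hmono) hball hconv
end
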